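/- arXiv:2401.06799 — 2 statements merged into one kernel-verified Lean document; each statement's English description precedes it below -/
import Mathlib

section
/- Multi-sample (InfoNCE) lower bound on mutual information (second inequality of Proposition 1): Let (A,B) be a pair of random variables with values in measurable spaces 𝒜 and ℬ, let C ≥ 1 be an integer, let sim : 𝒜 × ℬ → ℝ be measurable and bounded, and let τ > 0. Let (A, B₁) have the joint law of (A,B), and let B₂, …, B_C be i.i.d. with the marginal law of B, independent of (A,B₁). Define the expected contrastive cross-entropy L_CE := E[ −log( exp(sim(A,B₁)/τ) / Σ_{i=1}^{C} exp(sim(A,B_i)/τ) ) ]. Then I(A;B) ≥ log C − L_CE, where I(A;B) := KL(law(A,B) ‖ law(A) ⊗ law(B)). -/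
open MeasureTheory Real Classical

open scoped ENNReal

lemma aux_pi_symm {β : Type*} [MeasurableSpace β] (Q : Measure β) [IsProbabilityMeasure Q]
    (n : ℕ) (g : β → ℝ) (hg : Measurable g) (hpos : ∀ y, 0 < g y) :
    ∫⁻ w : Fin (n + 1) → β, ENNReal.ofReal (((n : ℝ) + 1) * (g (w 0) / ∑ j, g (w j)))
      ∂(Measure.pi fun _ => Q) = 1 := by
  set P : Measure (Fin (n + 1) → β) := Measure.pi fun _ => Q with hP
  have hS : ∀ w : Fin (n + 1) → β, 0 < ∑ j, g (w j) :=
    fun w => Finset.sum_pos (fun j _ => hpos _) Finset.univ_nonempty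
  have hFmeas : ∀ k : Fin (n + 1), Measurable fun w : Fin (n + 1) → β =>
      ENNReal.ofReal (g (w k) / ∑ j, g (w j)) := by
    intro k
    exact ((hg.comp (measurable_pi_apply k)).div
      (Finset.measurable_sum _ fun j _ => hg.comp (measurable_pi_apply j))).ennreal_ofReal
  have hI : ∀ k : Fin (n + 1),
      (∫⁻ w, ENNReal.ofReal (g (w k) / ∑ j, g (w j)) ∂P)
        = ∫⁻ w, ENNReal.ofReal (g (w 0) / ∑ j, g (w j)) ∂P := by
    intro k
    have hmp := measurePreserving_piCongrLeft (fun _ : Fin (n + 1) => Q) (Equiv.swap k 0)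
    rw [MeasurePreserving.lintegral_map_equiv
      (fun w => ENNReal.ofReal (g (w k) / ∑ j, g (w j))) _ hmp]
    refine lintegral_congr fun w => ?_
    have happ : ∀ j, (MeasurableEquiv.piCongrLeft (fun _ => β) (Equiv.swap k 0)) w j
        = w ((Equiv.swap k 0).symm j) := by
      intro j
      simp [MeasurableEquiv.coe_piCongrLeft, Equiv.piCongrLeft_apply, eq_rec_constant]
      exact eq_rec_constant _ _
    simp only [happ, Equiv.symm_swap, Equiv.swap_apply_left]
    congr 1
    rw [Equiv.sum_comp (Equiv.swap k 0) (fun j => g (w j))]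
  have hsum : (∑ k : Fin (n + 1), ∫⁻ w, ENNReal.ofReal (g (w k) / ∑ j, g (w j)) ∂P) = 1 := by
    rw [← lintegral_finset_sum _ fun k _ => hFmeas k]
    have hone : ∀ w : Fin (n + 1) → β,
        (∑ k, ENNReal.ofReal (g (w k) / ∑ j, g (w j))) = 1 := by
      intro w
      rw [← ENNReal.ofReal_sum_of_nonneg fun k _ => div_nonneg (hpos _).le (hS w).le,
        ← Finset.sum_div, div_self (hS w).ne', ENNReal.ofReal_one]
    simp only [hone]
    simp
  calc ∫⁻ w, ENNReal.ofReal (((n : ℝ) + 1) * (g (w 0) / ∑ j, g (w j))) ∂P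
      = ∫⁻ w, ((n : ℝ≥0∞) + 1) * ENNReal.ofReal (g (w 0) / ∑ j, g (w j)) ∂P := by
        refine lintegral_congr fun w => ?_
        rw [ENNReal.ofReal_mul (by positivity)]
        congr 1
        rw [show ((n : ℝ) + 1) = ((n + 1 : ℕ) : ℝ) by push_cast; ring, ENNReal.ofReal_natCast,
          Nat.cast_add, Nat.cast_one]
    _ = ((n : ℝ≥0∞) + 1) * ∫⁻ w, ENNReal.ofReal (g (w 0) / ∑ j, g (w j)) ∂P :=
        lintegral_const_mul _ (hFmeas 0)
    _ = 1 := by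
        have h2 : (∑ k : Fin (n + 1), ∫⁻ w, ENNReal.ofReal (g (w k) / ∑ j, g (w j)) ∂P)
            = ((n : ℝ≥0∞) + 1) * ∫⁻ w, ENNReal.ofReal (g (w 0) / ∑ j, g (w j)) ∂P := by
          rw [Finset.sum_congr rfl fun k _ => hI k, Finset.sum_const, Finset.card_univ,
            Fintype.card_fin, nsmul_eq_mul, Nat.cast_add, Nat.cast_one]
        rw [← h2]
        exact hsum

lemma aux_total {α β : Type*} [MeasurableSpace α] [MeasurableSpace β]
    (P : Measure α) (Q : Measure β) [IsProbabilityMeasure P] [IsProbabilityMeasure Q]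
    (n : ℕ) (g : α → β → ℝ) (hg : Measurable fun x : α × β => g x.1 x.2)
    (hpos : ∀ a b, 0 < g a b) :
    ∫⁻ x : (α × β) × (Fin n → β),
        ENNReal.ofReal (((n : ℝ) + 1) * (g x.1.1 x.1.2 / (g x.1.1 x.1.2 + ∑ i, g x.1.1 (x.2 i))))
      ∂((P.prod Q).prod (Measure.pi fun _ => Q)) = 1 := by
  set H : (α × β) × (Fin n → β) → ℝ≥0∞ := fun x =>
    ENNReal.ofReal (((n : ℝ) + 1) * (g x.1.1 x.1.2 / (g x.1.1 x.1.2 + ∑ i, g x.1.1 (x.2 i))))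
    with hH
  have hu : Measurable fun x : (α × β) × (Fin n → β) => g x.1.1 x.1.2 :=
    hg.comp measurable_fst
  have hsi : ∀ i : Fin n, Measurable fun x : (α × β) × (Fin n → β) => g x.1.1 (x.2 i) := by
    intro i
    have hm : Measurable fun x : (α × β) × (Fin n → β) => (x.1.1, x.2 i) :=
      measurable_fst.fst.prodMk ((measurable_pi_apply i).comp measurable_snd)
    exact hg.comp hm
  have hHm : Measurable H := by
    exact (measurable_const.mul (hu.div (hu.add
      (Finset.measurable_sum _ fun i _ => hsi i)))).ennreal_ofReal
  rw [lintegral_prod _ hHm.aemeasurable,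
    lintegral_prod _ (hHm.lintegral_prod_right').aemeasurable]
  have key : ∀ a : α,
      (∫⁻ b, ∫⁻ z, H ((a, b), z) ∂(Measure.pi fun _ => Q) ∂Q) = 1 := by
    intro a
    have hga : Measurable (g a) := hg.comp (measurable_prodMk_left)
    have hHa : Measurable fun p : β × (Fin n → β) => H ((a, p.1), p.2) :=
      hHm.comp (((measurable_const.prodMk measurable_fst)).prodMk measurable_snd)
    rw [← lintegral_prod _ hHa.aemeasurable]
    have hmp := measurePreserving_piFinSuccAbove (fun _ : Fin (n + 1) => Q) 0
    rw [MeasurePreserving.lintegral_map_equiv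
      (fun p : β × (Fin n → β) => H ((a, p.1), p.2)) _ hmp]
    rw [← aux_pi_symm Q n (g a) hga (hpos a)]
    refine lintegral_congr fun w => ?_
    simp only [hH, MeasurableEquiv.piFinSuccAbove_apply, Fin.insertNthEquiv_symm_apply,
      Fin.removeNth]
    congr 2
    rw [Fin.sum_univ_succAbove (fun k => g a (w k)) 0]
  simp only [key]
  simp

/-- Kullback–Leibler divergence: `∫ log (dμ/dν) dμ` if `μ ≪ ν` and the integral exists,
`+∞` otherwise. -/
noncomputable def klDiv {Ω : Type*} [MeasurableSpace Ω] (μ ν : Measure Ω) : EReal :=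
  if μ ≪ ν ∧ Integrable (llr μ ν) μ then ((∫ x, llr μ ν x ∂μ : ℝ) : EReal) else ⊤

set_option maxHeartbeats 1000000 in
/-- Multi-sample (InfoNCE) lower bound on mutual information: `I(A;B) ≥ log C − L_CE`,
where the positive pair `(A, B₁)` has the joint law `ν` of `(A,B)` and the `C − 1`
negative samples `B₂, …, B_C` are i.i.d. with the marginal law of `B`, independent of
`(A, B₁)`. -/
theorem infoNCE_lower_bound {α β : Type*} [MeasurableSpace α] [MeasurableSpace β]
    -- the joint law of `(A, B)`
    (ν : Measure (α × β)) [IsProbabilityMeasure ν]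
    (C : ℕ) (hC : 1 ≤ C)
    (sim : α → β → ℝ) (hsim : Measurable fun x : α × β => sim x.1 x.2)
    (hbdd : ∃ M : ℝ, ∀ a b, |sim a b| ≤ M)
    (τ : ℝ) (hτ : 0 < τ) :
    -- `Q` is the marginal law of `B`; the law of `(A, B₁, (B₂, …, B_C))` is `ν ⊗ Q^{⊗(C-1)}`
    let Q : Measure β := ν.map Prod.snd
    let μ : Measure ((α × β) × (Fin (C - 1) → β)) := ν.prod (Measure.pi fun _ => Q)
    let LCE : ℝ := ∫ x, -log (exp (sim x.1.1 x.1.2 / τ)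
        / (exp (sim x.1.1 x.1.2 / τ) + ∑ i, exp (sim x.1.1 (x.2 i) / τ))) ∂μ
    ((log C - LCE : ℝ) : EReal) ≤ klDiv ν ((ν.map Prod.fst).prod Q) := by
  intro Q μ LCE
  obtain ⟨M, hM⟩ := hbdd
  obtain ⟨n, rfl⟩ : ∃ n, C = n + 1 := ⟨C - 1, (Nat.succ_pred_eq_of_pos hC).symm⟩
  haveI hQprob : IsProbabilityMeasure Q := Measure.isProbabilityMeasure_map measurable_snd.aemeasurable
  have hstart : log ((n + 1 : ℕ) : ℝ) - LCE
      = log ((n + 1 : ℕ) : ℝ) - ∫ x : (α × β) × (Fin n → β), -log (exp (sim x.1.1 x.1.2 / τ)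
        / (exp (sim x.1.1 x.1.2 / τ) + ∑ i, exp (sim x.1.1 (x.2 i) / τ)))
        ∂(ν.prod (Measure.pi fun _ => Q)) := rfl
  rw [hstart]
  clear hstart
  set μν : Measure ((α × β) × (Fin n → β)) := ν.prod (Measure.pi fun _ => Q) with hμν
  haveI : IsProbabilityMeasure μν := by rw [hμν]; infer_instance
  set P : Measure α := ν.map Prod.fst with hPdef
  haveI : IsProbabilityMeasure P := Measure.isProbabilityMeasure_map measurable_fst.aemeasurable
  -- basic objects
  obtain ⟨g, hgval⟩ : ∃ g' : α → β → ℝ, g' = fun a b => exp (sim a b / τ) := ⟨_, rfl⟩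
  have hgpos : ∀ a b, 0 < g a b := by rw [hgval]; exact fun a b => exp_pos _
  have hgm : Measurable fun x : α × β => g x.1 x.2 := by
    rw [hgval]; exact (hsim.div_const τ).exp
  set S : (α × β) × (Fin n → β) → ℝ := fun x => g x.1.1 x.1.2 + ∑ i, g x.1.1 (x.2 i) with hSdef
  set q : (α × β) × (Fin n → β) → ℝ := fun x => g x.1.1 x.1.2 / S x with hqdef
  have hL : (∫ x : (α × β) × (Fin n → β), -log (exp (sim x.1.1 x.1.2 / τ)
      / (exp (sim x.1.1 x.1.2 / τ) + ∑ i, exp (sim x.1.1 (x.2 i) / τ))) ∂μν)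
      = ∫ x, -log (q x) ∂μν := by
    simp only [hqdef, hSdef, hgval]
  rw [hL]
  clear hL
  have hSpos : ∀ x, 0 < S x := fun x =>
    add_pos_of_pos_of_nonneg (hgpos _ _) (Finset.sum_nonneg fun i _ => (hgpos _ _).le)
  have hqpos : ∀ x, 0 < q x := fun x => div_pos (hgpos _ _) (hSpos x)
  have hqle : ∀ x, q x ≤ 1 := fun x => div_le_one_of_le₀
    (le_add_of_nonneg_right (Finset.sum_nonneg fun i _ => (hgpos _ _).le)) (hSpos x).le
  have hu : Measurable fun x : (α × β) × (Fin n → β) => g x.1.1 x.1.2 := hgm.comp measurable_fst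
  have hsi : ∀ i : Fin n, Measurable fun x : (α × β) × (Fin n → β) => g x.1.1 (x.2 i) := by
    intro i
    have hm : Measurable fun x : (α × β) × (Fin n → β) => (x.1.1, x.2 i) :=
      measurable_fst.fst.prodMk ((measurable_pi_apply i).comp measurable_snd)
    exact hgm.comp hm
  have hSm : Measurable S := hu.add (Finset.measurable_sum _ fun i _ => hsi i)
  have hqm : Measurable q := hu.div hSm
  -- lower bound on q
  have hgub : ∀ a b, g a b ≤ exp (M / τ) := by
    rw [hgval]
    intro a b
    apply exp_le_exp.mpr
    gcongr
    exact (abs_le.mp (hM a b)).2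
  have hglb : ∀ a b, exp (-(M / τ)) ≤ g a b := by
    rw [hgval]
    intro a b
    apply exp_le_exp.mpr
    rw [← neg_div]
    gcongr
    exact (abs_le.mp (hM a b)).1
  set lb : ℝ := exp (-(M / τ)) / (((n : ℝ) + 1) * exp (M / τ)) with hlbdef
  have hlbpos : 0 < lb := by positivity
  have hqlb : ∀ x, lb ≤ q x := by
    intro x
    rw [hlbdef, hqdef]
    have hSub : S x ≤ ((n : ℝ) + 1) * exp (M / τ) := by
      rw [hSdef]
      simp only
      have : (∑ i : Fin n, g x.1.1 (x.2 i)) ≤ (n : ℝ) * exp (M / τ) := by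
        calc (∑ i : Fin n, g x.1.1 (x.2 i)) ≤ ∑ _i : Fin n, exp (M / τ) :=
              Finset.sum_le_sum fun i _ => hgub _ _
          _ = (n : ℝ) * exp (M / τ) := by
              rw [Finset.sum_const, Finset.card_univ, Fintype.card_fin, nsmul_eq_mul]
      nlinarith [hgub x.1.1 x.1.2]
    exact div_le_div₀ (hgpos _ _).le (hglb _ _) (hSpos x) hSub
  -- integrability of log q
  have hlq_int : Integrable (fun x => log (q x)) μν := by
    refine Integrable.mono' (integrable_const (|log lb|))
      (Real.measurable_log.comp hqm).aestronglyMeasurable ?_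
    refine Filter.Eventually.of_forall fun x => ?_
    rw [Real.norm_eq_abs, abs_le]
    constructor
    · calc -|log lb| ≤ log lb := neg_abs_le _
        _ ≤ log (q x) := Real.log_le_log hlbpos (hqlb x)
    · calc log (q x) ≤ 0 := Real.log_nonpos (hqpos x).le (hqle x)
        _ ≤ |log lb| := abs_nonneg _
  have hfq : ∀ x, log (((n : ℝ) + 1) * q x) = log ((n : ℝ) + 1) + log (q x) :=
    fun x => log_mul (by positivity) (hqpos x).ne'
  have hkey : log ((n + 1 : ℕ) : ℝ) - ∫ x, -log (q x) ∂μν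
      = ∫ x, log (((n : ℝ) + 1) * q x) ∂μν := by
    rw [integral_neg,
      show (fun x => log (((n : ℝ) + 1) * q x)) = fun x => log ((n : ℝ) + 1) + log (q x)
        from funext hfq,
      integral_add (integrable_const _) hlq_int, integral_const]
    simp only [measure_univ, ENNReal.toReal_one, probReal_univ, one_smul]
    push_cast
    ring
  have hf_int : Integrable (fun x => log (((n : ℝ) + 1) * q x)) μν := by
    rw [show (fun x => log (((n : ℝ) + 1) * q x)) = fun x => log ((n : ℝ) + 1) + log (q x)
      from funext hfq]
    exact (integrable_const _).add hlq_int
  -- the KL divergence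
  simp only [klDiv]
  split_ifs with hkl
  · obtain ⟨hac, hint⟩ := hkl
    rw [EReal.coe_le_coe_iff, hkey]
    set pp : Measure (α × β) := P.prod Q with hppdef
    set ρ : α × β → ℝ≥0∞ := ν.rnDeriv pp with hρdef
    have hρm : Measurable ρ := Measure.measurable_rnDeriv ν pp
    have hmapfst : μν.map Prod.fst = ν := by
      rw [hμν, Measure.map_fst_prod]
      simp
    have hgood : ∀ᵐ y ∂ν, 0 < ρ y ∧ ρ y < ∞ :=
      (Measure.rnDeriv_pos hac).and (hac.ae_le (Measure.rnDeriv_lt_top ν pp))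
    have hgoodμ : ∀ᵐ x ∂μν, 0 < ρ x.1 ∧ ρ x.1 < ∞ := by
      rw [← hmapfst] at hgood
      exact ae_of_ae_map measurable_fst.aemeasurable hgood
    have hllr_m : Measurable (llr ν pp) := measurable_llr _ _
    have hllr_int : Integrable (fun x : (α × β) × (Fin n → β) => llr ν pp x.1) μν := by
      have h1 : Integrable (llr ν pp) (μν.map Prod.fst) := by rw [hmapfst]; exact hint
      exact (integrable_map_measure hllr_m.aestronglyMeasurable
        measurable_fst.aemeasurable).mp h1
    have hllr_eq : ∫ x : (α × β) × (Fin n → β), llr ν pp x.1 ∂μν = ∫ y, llr ν pp y ∂ν := by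
      rw [← integral_map measurable_fst.aemeasurable hllr_m.aestronglyMeasurable, hmapfst]
    set h : (α × β) × (Fin n → β) → ℝ := fun x => (((n : ℝ) + 1) * q x) / (ρ x.1).toReal
      with hhdef
    have hh_nonneg : ∀ x, 0 ≤ h x := fun x =>
      div_nonneg (mul_nonneg (by positivity) (hqpos x).le) ENNReal.toReal_nonneg
    have hhm : Measurable h := (measurable_const.mul hqm).div
      ((ENNReal.measurable_toReal.comp hρm).comp measurable_fst)
    -- key lintegral bound
    have hT : ∫⁻ x, ENNReal.ofReal (h x) ∂μν ≤ 1 := by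
      set G : (α × β) × (Fin n → β) → ℝ≥0∞ := fun x => ENNReal.ofReal (((n : ℝ) + 1) * q x)
        with hGdef
      have hGm : Measurable G := (measurable_const.mul hqm).ennreal_ofReal
      have h1 : ∫⁻ x, ENNReal.ofReal (h x) ∂μν = ∫⁻ x, G x * (ρ x.1)⁻¹ ∂μν := by
        refine lintegral_congr_ae ?_
        filter_upwards [hgoodμ] with x hx
        simp only [hhdef, hGdef]
        rw [ENNReal.ofReal_div_of_pos (ENNReal.toReal_pos hx.1.ne' hx.2.ne),
          ENNReal.ofReal_toReal hx.2.ne, div_eq_mul_inv]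
      have hmeas2 : Measurable fun x : (α × β) × (Fin n → β) => G x * (ρ x.1)⁻¹ :=
        hGm.mul ((hρm.comp measurable_fst).inv)
      rw [h1, hμν, lintegral_prod _ hmeas2.aemeasurable]
      have h2 : ∀ x1 : α × β, (∫⁻ z, G (x1, z) * (ρ (x1, z).1)⁻¹ ∂(Measure.pi fun _ : Fin n => Q))
          = (∫⁻ z, G (x1, z) ∂(Measure.pi fun _ : Fin n => Q)) * (ρ x1)⁻¹ :=
        fun x1 => by
          have hGx1 : Measurable fun z : Fin n → β => G (x1, z) :=
            hGm.comp measurable_prodMk_left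
          exact lintegral_mul_const ((ρ x1)⁻¹) hGx1
      simp only [h2]
      set φ : α × β → ℝ≥0∞ := fun x1 => ∫⁻ z, G (x1, z) ∂(Measure.pi fun _ : Fin n => Q)
        with hφdef
      have hφm : Measurable φ := hGm.lintegral_prod_right'
      calc ∫⁻ x1, φ x1 * (ρ x1)⁻¹ ∂ν
          = ∫⁻ x1, (ρ x1 * (φ x1 * (ρ x1)⁻¹)) ∂pp := by
            conv_lhs => rw [← Measure.withDensity_rnDeriv_eq ν pp hac]
            erw [lintegral_withDensity_eq_lintegral_mul pp (Measure.measurable_rnDeriv ν pp)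
              (hφm.mul hρm.inv)]
            rfl
        _ ≤ ∫⁻ x1, φ x1 ∂pp := by
            refine lintegral_mono fun x1 => ?_
            calc ρ x1 * (φ x1 * (ρ x1)⁻¹) = φ x1 * (ρ x1 * (ρ x1)⁻¹) := by ring
              _ ≤ φ x1 * 1 := mul_le_mul_right (ENNReal.mul_inv_le_one _) _
              _ = φ x1 := mul_one _
        _ = 1 := by
            rw [hφdef]
            rw [← lintegral_prod _ hGm.aemeasurable]
            exact aux_total P Q n g hgm hgpos
    have hh_int : Integrable h μν := by
      refine ⟨hhm.aestronglyMeasurable, ?_⟩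
      rw [HasFiniteIntegral]
      have hnn : ∀ x, ‖h x‖ₑ = ENNReal.ofReal (h x) :=
        fun x => Real.enorm_eq_ofReal (hh_nonneg x)
      simp only [hnn]
      exact lt_of_le_of_lt hT ENNReal.one_lt_top
    have hh_le : ∫ x, h x ∂μν ≤ 1 := by
      rw [integral_eq_lintegral_of_nonneg_ae (Filter.Eventually.of_forall hh_nonneg)
        hhm.aestronglyMeasurable]
      calc (∫⁻ x, ENNReal.ofReal (h x) ∂μν).toReal ≤ (1 : ℝ≥0∞).toReal :=
            ENNReal.toReal_mono ENNReal.one_ne_top hT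
        _ = 1 := ENNReal.toReal_one
    have hptwise : ∀ᵐ x ∂μν, log (((n : ℝ) + 1) * q x) - llr ν pp x.1 ≤ h x - 1 := by
      filter_upwards [hgoodμ] with x hx
      have htR : 0 < (ρ x.1).toReal := ENNReal.toReal_pos hx.1.ne' hx.2.ne
      have hnum : 0 < ((n : ℝ) + 1) * q x := mul_pos (by positivity) (hqpos x)
      have hllr : llr ν pp x.1 = log (ρ x.1).toReal := rfl
      rw [hllr, ← Real.log_div hnum.ne' htR.ne']
      exact Real.log_le_sub_one_of_pos (div_pos hnum htR)
    rw [← hllr_eq]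
    calc ∫ x, log (((n : ℝ) + 1) * q x) ∂μν
        = ∫ x, (log (((n : ℝ) + 1) * q x) - llr ν pp x.1) ∂μν
            + ∫ x, llr ν pp x.1 ∂μν := by
          rw [integral_sub hf_int hllr_int]; ring
      _ ≤ ∫ x, (h x - 1) ∂μν + ∫ x, llr ν pp x.1 ∂μν :=
          add_le_add_left (integral_mono_ae (hf_int.sub hllr_int)
            (hh_int.sub (integrable_const 1)) hptwise) _
      _ = (∫ x, h x ∂μν - 1) + ∫ x, llr ν pp x.1 ∂μν := by
          rw [integral_sub hh_int (integrable_const 1), integral_const]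
          simp
      _ ≤ 0 + ∫ x, llr ν pp x.1 ∂μν := by
          have : ∫ x, h x ∂μν - 1 ≤ 0 := by linarith
          linarith
      _ = ∫ x, llr ν pp x.1 ∂μν := zero_add _
  · exact le_top
end

section
/- Kernelized Wasserstein gradient of the KL functional (the SVGD drift formula): Fix θ ∈ ℝ^d. Let V : ℝ^d → ℝ be continuously differentiable with Z := ∫ e^{−V} dθ' ∈ (0,∞), and let π be the probability measure with density e^{−V}/Z with respect to Lebesgue measure. Let μ be a probability measure with continuously differentiable, strictly positive density ρ on ℝ^d, and let K(θ,·) : ℝ^d → ℝ be continuously differentiable such that the function θ' ↦ K(θ,θ')ρ(θ') has compact support. Then ∫_{ℝ^d} K(θ,θ') ∇_{θ'} log(ρ(θ')/ (e^{−V(θ')}/Z)) ρ(θ') dθ' = ∫_{ℝ^d} K(θ,θ') ∇_{θ'}V(θ') ρ(θ') dθ' − ∫_{ℝ^d} ∇_{θ'} K(θ,θ') ρ(θ') dθ'. -/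
open MeasureTheory Real

/-- Kernelized Wasserstein gradient of the KL functional (the SVGD drift formula):
`∫ K(θ,·) ∇ log(ρ / (e^{−V}/Z)) dμ = ∫ K(θ,·) ∇V dμ − ∫ ∇K(θ,·) dμ`,
where `μ` has density `ρ`. -/
theorem svgd_drift_formula {d : ℕ} (θ : Fin d → ℝ)
    (V : (Fin d → ℝ) → ℝ) (hV : ContDiff ℝ 1 V)
    (hexp_int : Integrable (fun θ' => exp (-V θ')) volume)
    (Z : ℝ) (hZ : Z = ∫ θ', exp (-V θ')) (hZ_pos : 0 < Z)
    -- `π` is the probability measure with density `e^{−V}/Z` w.r.t. Lebesgue measure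
    (prior : Measure (Fin d → ℝ))
    (hprior : prior = volume.withDensity fun θ' => ENNReal.ofReal (exp (-V θ') / Z))
    -- `μ` is a probability measure with C¹, strictly positive density `ρ`
    (ρ : (Fin d → ℝ) → ℝ) (hρ : ContDiff ℝ 1 ρ) (hρ_pos : ∀ θ', 0 < ρ θ')
    (μ : Measure (Fin d → ℝ)) [IsProbabilityMeasure μ]
    (hμ : μ = volume.withDensity fun θ' => ENNReal.ofReal (ρ θ'))
    -- the kernel slice `K(θ,·)` is C¹ and `K(θ,·) ρ` has compact support
    (K : (Fin d → ℝ) → (Fin d → ℝ) → ℝ) (hK : ContDiff ℝ 1 (K θ))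
    (hsupp : HasCompactSupport fun θ' => K θ θ' * ρ θ') :
    ∀ i : Fin d,
      ∫ θ', K θ θ'
          * fderiv ℝ (fun t => log (ρ t / (exp (-V t) / Z))) θ' (Pi.single i 1) * ρ θ'
        = (∫ θ', K θ θ' * fderiv ℝ V θ' (Pi.single i 1) * ρ θ')
          - ∫ θ', fderiv ℝ (K θ) θ' (Pi.single i 1) * ρ θ' := by

  intro i
  set v : Fin d → ℝ := Pi.single i 1 with hv
  -- the log of the ratio simplifies
  have hfun : (fun t => log (ρ t / (exp (-V t) / Z))) = fun t => log (ρ t) + V t + log Z := by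
    funext t
    rw [Real.log_div (hρ_pos t).ne' (div_ne_zero (exp_ne_zero _) hZ_pos.ne'),
      Real.log_div (exp_ne_zero _) hZ_pos.ne', Real.log_exp]
    ring
  -- pointwise derivative of the log-ratio
  have hders : ∀ t, fderiv ℝ (fun t => log (ρ t / (exp (-V t) / Z))) t v
      = (ρ t)⁻¹ * fderiv ℝ ρ t v + fderiv ℝ V t v := by
    intro t
    have h1 : HasFDerivAt (fun t => log (ρ t) + V t + log Z)
        (((ρ t)⁻¹ • fderiv ℝ ρ t) + fderiv ℝ V t) t :=
      ((((hρ.differentiable one_ne_zero t).hasFDerivAt.log (hρ_pos t).ne').add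
        (hV.differentiable one_ne_zero t).hasFDerivAt)).add_const (log Z)
    rw [hfun, h1.fderiv]
    simp
  -- K θ has compact support since ρ is everywhere positive
  have hKc : HasCompactSupport (K θ) := by
    have hs : Function.support (K θ) = Function.support (fun θ' => K θ θ' * ρ θ') := by
      ext x
      simp [mul_ne_zero_iff, (hρ_pos x).ne']
    rw [HasCompactSupport, tsupport, hs]
    exact hsupp
  have contρ' : Continuous fun x => fderiv ℝ ρ x v :=
    (hρ.continuous_fderiv one_ne_zero).clm_apply continuous_const
  have contV' : Continuous fun x => fderiv ℝ V x v :=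
    (hV.continuous_fderiv one_ne_zero).clm_apply continuous_const
  have contK' : Continuous fun x => fderiv ℝ (K θ) x v :=
    (hK.continuous_fderiv one_ne_zero).clm_apply continuous_const
  have hK'c : HasCompactSupport fun x => fderiv ℝ (K θ) x v :=
    (hKc.fderiv ℝ).comp_left (g := fun L : ((Fin d → ℝ) →L[ℝ] ℝ) => L v) (by simp)
  -- integrability facts
  have intKρ : Integrable (fun x => K θ x * ρ x) volume :=
    (hK.continuous.mul hρ.continuous).integrable_of_hasCompactSupport hsupp
  have intKρ' : Integrable (fun x => K θ x * fderiv ℝ ρ x v) volume :=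
    (hK.continuous.mul contρ').integrable_of_hasCompactSupport (hKc.mul_right)
  have intK'ρ : Integrable (fun x => fderiv ℝ (K θ) x v * ρ x) volume :=
    (contK'.mul hρ.continuous).integrable_of_hasCompactSupport (hK'c.mul_right)
  have intKV'ρ : Integrable (fun x => K θ x * fderiv ℝ V x v * ρ x) volume := by
    have : Integrable (fun x => K θ x * (fderiv ℝ V x v * ρ x)) volume :=
      (hK.continuous.mul (contV'.mul hρ.continuous)).integrable_of_hasCompactSupport
        (hKc.mul_right)
    simpa [mul_assoc] using this
  -- integration by parts
  have ibp : ∫ x, K θ x * fderiv ℝ ρ x v = - ∫ x, fderiv ℝ (K θ) x v * ρ x :=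
    integral_mul_fderiv_eq_neg_fderiv_mul_of_integrable intK'ρ intKρ' intKρ
      (fun x _ => hK.differentiable one_ne_zero x) (fun x _ => hρ.differentiable one_ne_zero x)
  calc ∫ θ', K θ θ' * fderiv ℝ (fun t => log (ρ t / (exp (-V t) / Z))) θ' v * ρ θ'
      = ∫ θ', (K θ θ' * fderiv ℝ ρ θ' v + K θ θ' * fderiv ℝ V θ' v * ρ θ') := by
        congr 1
        funext t
        have hne := (hρ_pos t).ne'
        rw [hders t]
        field_simp
    _ = (∫ θ', K θ θ' * fderiv ℝ ρ θ' v) + ∫ θ', K θ θ' * fderiv ℝ V θ' v * ρ θ' :=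
        integral_add intKρ' intKV'ρ
    _ = (∫ θ', K θ θ' * fderiv ℝ V θ' v * ρ θ')
          - ∫ θ', fderiv ℝ ((K θ)) θ' v * ρ θ' := by
        rw [ibp]; ring
end
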